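/- arXiv:1509.00907 — 2 statements merged into one kernel-verified Lean document; each statement's English description precedes it below -/
import Mathlib

section
/- Let (t_a, t_{a+1}, ...) be a sequence of strictly positive reals with t_N ~ C·N^{−p} as N → ∞, for some constants C > 0 and p > 0. Define ν(N) = inf{ N' ≥ N : t_{N'} = min{t_a, ..., t_{N'}} } (the first 'new low' at or after N). Then ν(N) is finite for all N, and t_{ν(N)} ~ C·N^{−p} as N → ∞. -/
/-!
Write `g(N) = C N^{-p}` and `m(N) = min (t_a, …, t_N)`. A new low `n = ν(N)` satisfies
`t_n ≤ m(N)`, and if `n > N` then no index in `[N, n)` is a new low, so the minimum of `t` over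
`[a, n - 1]` is attained before `N`, giving `m(N) ≤ t_{n-1}`. Since `t_n / t_{n-1} → 1` (as
`g(n+1) / g(n) → 1`), this squeezes `t_{ν(N)} ~ m(N)`; and `m(N) ~ g(N)` because `g` is
eventually decreasing and tends to `0`.
-/

open Filter Topology

section NewLows

variable {a N : ℕ} {t : ℕ → ℝ}

def newLowsFrom (a : ℕ) (t : ℕ → ℝ) (N : ℕ) : Set ℕ :=
  {N' : ℕ | N ≤ N' ∧ ∀ k, a ≤ k → k ≤ N' → t N' ≤ t k}

noncomputable def firstNewLow (a : ℕ) (t : ℕ → ℝ) (N : ℕ) : ℕ :=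
  sInf (newLowsFrom a t N)

noncomputable def runningMin (a : ℕ) (t : ℕ → ℝ) (N : ℕ) : ℝ :=
  ⨅ k : Set.Icc a N, t k

theorem runningMin_le {k : ℕ} (hk : k ∈ Set.Icc a N) : runningMin a t N ≤ t k :=
  ciInf_le (Set.finite_range _).bddBelow (⟨k, hk⟩ : Set.Icc a N)

theorem exists_eq_runningMin (hN : a ≤ N) : ∃ j ∈ Set.Icc a N, t j = runningMin a t N := by
  have : Nonempty (Set.Icc a N) := ⟨⟨N, hN, le_rfl⟩⟩
  obtain ⟨⟨j, hj⟩, hjmin⟩ := exists_eq_ciInf_of_finite (f := fun k : Set.Icc a N => t k)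
  exact ⟨j, hj, hjmin⟩

theorem runningMin_pos (hpos : ∀ n, a ≤ n → 0 < t n) (hN : a ≤ N) : 0 < runningMin a t N := by
  obtain ⟨j, hj, hjmin⟩ := exists_eq_runningMin (t := t) hN
  exact hjmin ▸ hpos j hj.1

theorem mem_newLowsFrom_of_eq_runningMin {n j : ℕ} (hj : j ∈ Set.Icc a n)
    (hjmin : t j = runningMin a t n) (hNj : N ≤ j) : j ∈ newLowsFrom a t N :=
  ⟨hNj, fun _ hak hkj => hjmin ▸ runningMin_le ⟨hak, hkj.trans hj.2⟩⟩

theorem newLowsFrom_nonempty (hpos : ∀ n, a ≤ n → 0 < t n) (ht : Tendsto t atTop (𝓝 0))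
    (hN : a ≤ N) : (newLowsFrom a t N).Nonempty := by
  obtain ⟨K, htK, hNK⟩ :=
    ((ht.eventually_lt_const (runningMin_pos hpos hN)).and (eventually_ge_atTop N)).exists
  obtain ⟨j, hj, hjmin⟩ := exists_eq_runningMin (t := t) (hN.trans hNK)
  refine ⟨j, mem_newLowsFrom_of_eq_runningMin hj hjmin ?_⟩
  by_contra! hjN
  have hKj : runningMin a t K ≤ t K := runningMin_le ⟨hN.trans hNK, le_rfl⟩
  have hNj : runningMin a t N ≤ t j := runningMin_le ⟨hj.1, hjN.le⟩
  linarith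

theorem firstNewLow_le {j : ℕ} (hj : j ∈ newLowsFrom a t N) : firstNewLow a t N ≤ j :=
  Nat.sInf_le hj

theorem runningMin_le_pred_firstNewLow (hN : a ≤ N) (hlt : N < firstNewLow a t N) :
    runningMin a t N ≤ t (firstNewLow a t N - 1) := by
  obtain ⟨j, hj, hjmin⟩ := exists_eq_runningMin (a := a) (t := t) (N := firstNewLow a t N - 1)
    (by omega)
  have hjN : j < N := by
    by_contra! hNj
    have := firstNewLow_le (mem_newLowsFrom_of_eq_runningMin hj hjmin hNj)
    have := hj.2
    omega
  calc runningMin a t N ≤ t j := runningMin_le ⟨hj.1, hjN.le⟩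
    _ = runningMin a t (firstNewLow a t N - 1) := hjmin
    _ ≤ t (firstNewLow a t N - 1) := runningMin_le ⟨by omega, le_rfl⟩

variable (hne : (newLowsFrom a t N).Nonempty)
include hne

theorem firstNewLow_mem : firstNewLow a t N ∈ newLowsFrom a t N :=
  Nat.sInf_mem hne

theorem le_firstNewLow : N ≤ firstNewLow a t N :=
  (firstNewLow_mem hne).1

theorem firstNewLow_le_runningMin (hN : a ≤ N) : t (firstNewLow a t N) ≤ runningMin a t N := by
  obtain ⟨j, hj, hjmin⟩ := exists_eq_runningMin (t := t) hN
  exact hjmin ▸ (firstNewLow_mem hne).2 j hj.1 (hj.2.trans (le_firstNewLow hne))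

theorem min_one_mul_runningMin_le (hpos : ∀ n, a ≤ n → 0 < t n) (hN : a ≤ N) :
    min 1 (t (firstNewLow a t N) / t (firstNewLow a t N - 1)) * runningMin a t N ≤
      t (firstNewLow a t N) := by
  have hm := runningMin_pos hpos hN
  rcases (le_firstNewLow hne).eq_or_lt with heq | hlt
  · calc _ ≤ 1 * runningMin a t N := by gcongr; exact min_le_left _ _
      _ ≤ t N := by rw [one_mul]; exact runningMin_le ⟨hN, le_rfl⟩
      _ = t (firstNewLow a t N) := by rw [← heq]
  · have hpred := hpos _ (hN.trans (Nat.le_pred_of_lt hlt))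
    calc _ ≤ t (firstNewLow a t N) / t (firstNewLow a t N - 1) * runningMin a t N := by
          gcongr; exact min_le_right _ _
      _ ≤ t (firstNewLow a t N) / t (firstNewLow a t N - 1) * t (firstNewLow a t N - 1) := by
          gcongr
          · exact (div_pos (hpos _ (hN.trans (le_firstNewLow hne))) hpred).le
          · exact runningMin_le_pred_firstNewLow hN hlt
      _ = t (firstNewLow a t N) := div_mul_cancel₀ _ hpred.ne'

end NewLows

section Asymptotics

variable {a : ℕ} {t g : ℕ → ℝ}

theorem tendsto_of_tendsto_div_of_tendsto {l : ℝ} (hg : Tendsto g atTop (𝓝 l))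
    (hg_pos : ∀ᶠ n in atTop, 0 < g n) (h : Tendsto (fun n => t n / g n) atTop (𝓝 1)) :
    Tendsto t atTop (𝓝 l) := by
  refine (one_mul l ▸ h.mul hg).congr' ?_
  filter_upwards [hg_pos] with n hn
  exact div_mul_cancel₀ _ hn.ne'

theorem eventually_lt_runningMin (hpos : ∀ n, a ≤ n → 0 < t n)
    (hg_pos : ∀ᶠ n in atTop, 0 < g n) (hg_anti : ∀ᶠ m in atTop, ∀ n, m ≤ n → g n ≤ g m)
    (hg0 : Tendsto g atTop (𝓝 0)) (h : Tendsto (fun n => t n / g n) atTop (𝓝 1))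
    {b : ℝ} (hb : b < 1) : ∀ᶠ N in atTop, b * g N < runningMin a t N := by
  obtain ⟨K, hK⟩ :=
    eventually_atTop.1 ((h.eventually (eventually_gt_nhds hb)).and (hg_pos.and hg_anti))
  set K' := max K a
  -- below `K'` the minimum is a fixed positive number, while `b * g N → 0`
  have hsmall : ∀ᶠ N in atTop, b * g N < runningMin a t K' := by
    refine (hg0.const_mul b).eventually (gt_mem_nhds ?_)
    simpa using runningMin_pos hpos (le_max_right K a)
  filter_upwards [hsmall, eventually_ge_atTop K'] with N hNsmall hNK
  obtain ⟨j, hj, hjmin⟩ := exists_eq_runningMin (t := t) ((le_max_right K a).trans hNK)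
  rw [← hjmin]
  rcases le_total j K' with hjK | hKj
  · exact hNsmall.trans_le (runningMin_le ⟨hj.1, hjK⟩)
  · obtain ⟨hbj, hgj, hg_anti_j⟩ := hK j ((le_max_left K a).trans hKj)
    have hgNj : g N ≤ g j := hg_anti_j N hj.2
    have hbj' : b * g j < t j := (lt_div_iff₀ hgj).1 hbj
    rcases lt_or_ge b 0 with hb0 | hb0
    · have hgN : 0 < g N := (hK N ((le_max_left K a).trans hNK)).2.1
      exact (mul_neg_of_neg_of_pos hb0 hgN).trans (hpos j hj.1)
    · exact (mul_le_mul_of_nonneg_left hgNj hb0).trans_lt hbj'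

theorem tendsto_runningMin_div (hpos : ∀ n, a ≤ n → 0 < t n)
    (hg_pos : ∀ᶠ n in atTop, 0 < g n) (hg_anti : ∀ᶠ m in atTop, ∀ n, m ≤ n → g n ≤ g m)
    (hg0 : Tendsto g atTop (𝓝 0)) (h : Tendsto (fun n => t n / g n) atTop (𝓝 1)) :
    Tendsto (fun N => runningMin a t N / g N) atTop (𝓝 1) := by
  refine tendsto_order.2 ⟨fun b hb => ?_, fun b hb => ?_⟩
  · filter_upwards [eventually_lt_runningMin hpos hg_pos hg_anti hg0 h hb, hg_pos] with N hN hgN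
    exact (lt_div_iff₀ hgN).2 hN
  · filter_upwards [h.eventually (eventually_lt_nhds hb), hg_pos, eventually_ge_atTop a]
      with N hN hgN haN
    exact (div_le_div_of_nonneg_right (runningMin_le ⟨haN, le_rfl⟩) hgN.le).trans_lt hN

theorem tendsto_div_pred (hpos : ∀ n, a ≤ n → 0 < t n) (hg_pos : ∀ᶠ n in atTop, 0 < g n)
    (hg_succ : Tendsto (fun n => g (n + 1) / g n) atTop (𝓝 1))
    (h : Tendsto (fun n => t n / g n) atTop (𝓝 1)) :
    Tendsto (fun n => t n / t (n - 1)) atTop (𝓝 1) := by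
  rw [← tendsto_add_atTop_iff_nat 1]
  have hlim : Tendsto (fun n => t (n + 1) / g (n + 1) * (g (n + 1) / g n) / (t n / g n))
      atTop (𝓝 (1 * 1 / 1)) :=
    (((tendsto_add_atTop_iff_nat 1).2 h).mul hg_succ).div h one_ne_zero
  rw [one_mul, div_one] at hlim
  refine hlim.congr' ?_
  filter_upwards [hg_pos, (tendsto_add_atTop_nat 1).eventually hg_pos, eventually_ge_atTop a]
    with n hgn hgn' han
  rw [Nat.add_sub_cancel]
  field_simp [hgn.ne', hgn'.ne', (hpos n han).ne']

theorem tendsto_firstNewLow_div (hpos : ∀ n, a ≤ n → 0 < t n)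
    (hg_pos : ∀ᶠ n in atTop, 0 < g n) (hg_anti : ∀ᶠ m in atTop, ∀ n, m ≤ n → g n ≤ g m)
    (hg0 : Tendsto g atTop (𝓝 0)) (hg_succ : Tendsto (fun n => g (n + 1) / g n) atTop (𝓝 1))
    (h : Tendsto (fun n => t n / g n) atTop (𝓝 1)) :
    Tendsto (fun N => t (firstNewLow a t N) / g N) atTop (𝓝 1) := by
  have hne : ∀ N, a ≤ N → (newLowsFrom a t N).Nonempty := fun N =>
    newLowsFrom_nonempty hpos (tendsto_of_tendsto_div_of_tendsto hg0 hg_pos h)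
  have hν : Tendsto (firstNewLow a t) atTop atTop :=
    tendsto_atTop_mono' _ (eventually_atTop.2 ⟨a, fun N hN => le_firstNewLow (hne N hN)⟩)
      tendsto_id
  have hratio : Tendsto (fun N => min 1 (t (firstNewLow a t N) / t (firstNewLow a t N - 1)))
      atTop (𝓝 1) := by
    simpa using (tendsto_const_nhds (x := (1 : ℝ))).min
      ((tendsto_div_pred hpos hg_pos hg_succ h).comp hν)
  have hmin := tendsto_runningMin_div hpos hg_pos hg_anti hg0 h
  refine tendsto_of_tendsto_of_tendsto_of_le_of_le' (by simpa using hratio.mul hmin) hmin ?_ ?_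
  all_goals
    filter_upwards [eventually_ge_atTop a, hg_pos] with N haN hgN
  · rw [← mul_div_assoc]
    exact div_le_div_of_nonneg_right (min_one_mul_runningMin_le (hne N haN) hpos haN) hgN.le
  · exact div_le_div_of_nonneg_right (firstNewLow_le_runningMin (hne N haN) haN) hgN.le

end Asymptotics

section PowerLaw

variable {C p : ℝ}

theorem eventually_pos_const_mul_rpow_neg (hC : 0 < C) :
    ∀ᶠ n : ℕ in atTop, 0 < C * (n : ℝ) ^ (-p) := by
  filter_upwards [eventually_ge_atTop 1] with n hn
  have : (0 : ℝ) < n := by exact_mod_cast hn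
  positivity

theorem eventually_antitone_const_mul_rpow_neg (hC : 0 < C) (hp : 0 < p) :
    ∀ᶠ m : ℕ in atTop, ∀ n, m ≤ n → C * (n : ℝ) ^ (-p) ≤ C * (m : ℝ) ^ (-p) := by
  filter_upwards [eventually_ge_atTop 1] with m hm n hmn
  have : (0 : ℝ) < m := by exact_mod_cast hm
  exact mul_le_mul_of_nonneg_left
    (Real.rpow_le_rpow_of_nonpos this (Nat.cast_le.2 hmn) (neg_nonpos.2 hp.le)) hC.le

theorem tendsto_const_mul_rpow_neg_zero (hp : 0 < p) :
    Tendsto (fun n : ℕ => C * (n : ℝ) ^ (-p)) atTop (𝓝 0) := by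
  simpa using ((tendsto_rpow_neg_atTop hp).comp tendsto_natCast_atTop_atTop).const_mul C

theorem tendsto_const_mul_rpow_neg_succ_div (hC : 0 < C) :
    Tendsto (fun n : ℕ => C * ((n + 1 : ℕ) : ℝ) ^ (-p) / (C * (n : ℝ) ^ (-p))) atTop (𝓝 1) := by
  have hlim := (tendsto_natCast_div_add_atTop (1 : ℝ)).rpow_const (p := p) (Or.inl one_ne_zero)
  rw [Real.one_rpow] at hlim
  refine hlim.congr' ?_
  filter_upwards [eventually_ge_atTop 1] with n hn
  have : (0 : ℝ) < n := by exact_mod_cast hn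
  rw [Real.div_rpow this.le (by positivity), Real.rpow_neg this.le, Real.rpow_neg (by positivity)]
  push_cast
  field_simp

end PowerLaw

/-- If `t_N ~ C N^{-p}` with `C, p > 0` and all `t_N > 0` (for `N ≥ a`), then for every `N`
the set of "new lows" at or after `N` is nonempty (so `ν(N)` is finite), and
`t_{ν(N)} ~ C N^{-p}`, where `ν(N)` is the first index `N' ≥ N` with
`t_{N'} = min{t_a, …, t_{N'}}`. -/
theorem new_low_asymptotics (a : ℕ) (t : ℕ → ℝ) (C p : ℝ) (hC : 0 < C) (hp : 0 < p)
    (hpos : ∀ N, a ≤ N → 0 < t N)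
    (hasymp : Tendsto (fun N : ℕ => t N / (C * (N : ℝ) ^ (-p))) atTop (nhds 1)) :
    (∀ N, a ≤ N → {N' : ℕ | N ≤ N' ∧ ∀ k, a ≤ k → k ≤ N' → t N' ≤ t k}.Nonempty) ∧
    Tendsto
      (fun N : ℕ =>
        t (sInf {N' : ℕ | N ≤ N' ∧ ∀ k, a ≤ k → k ≤ N' → t N' ≤ t k}) / (C * (N : ℝ) ^ (-p)))
      atTop (nhds 1) := by
  have hg_pos := eventually_pos_const_mul_rpow_neg (p := p) hC
  have hg0 := tendsto_const_mul_rpow_neg_zero (C := C) hp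
  refine ⟨fun N => newLowsFrom_nonempty hpos (tendsto_of_tendsto_div_of_tendsto hg0 hg_pos hasymp),
    tendsto_firstNewLow_div hpos hg_pos (eventually_antitone_const_mul_rpow_neg hC hp) hg0
      (tendsto_const_mul_rpow_neg_succ_div hC) hasymp⟩
end

section
/- Let d, n, L be positive integers with L ≥ 3n(n−2) and L ≥ 3n. For any n-tuple of points (r_1, ..., r_n) in the box B = {1,...,L}^d, there exists a point (r'_1, ..., r'_n) ∈ B^n with all r'_k pairwise distinct, all first coordinates of the r'_k pairwise distinct, and Σ_{k=1}^n ‖r_k − r'_k‖_1 ≤ n·d + n·max{n−1, (n−1)(2n−2)}. -/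
lemma exists_near (L : ℕ) (S : Finset ℕ) (x : ℕ) (hx : x ∈ Finset.Icc 1 L)
    (hS : S.card < L) :
    ∃ y ∈ Finset.Icc 1 L, y ∉ S ∧ ((x : ℤ) - y).natAbs ≤ S.card := by
  set m := S.card with hm
  set a := min x (L - m) with ha
  have hcard : (Finset.Icc a (a + m)).card = m + 1 := by
    rw [Nat.card_Icc]; omega
  obtain ⟨y, hyT, hyS⟩ : ∃ y ∈ Finset.Icc a (a + m), y ∉ S := by
    by_contra h
    push_neg at h
    have hsub : Finset.Icc a (a + m) ⊆ S := fun z hz => h z hz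
    have := Finset.card_le_card hsub
    omega
  simp only [Finset.mem_Icc] at hx hyT ⊢
  refine ⟨y, ?_, hyS, ?_⟩ <;> omega

/-- Any configuration of `n` points in the box `{1,…,L}^d` (with `L ≥ 3n(n−2)` and `L ≥ 3n`)
can be moved, within total ℓ¹ distance at most `n·d + n·max{n−1, (n−1)(2n−2)}`, to a
configuration of pairwise distinct points whose first coordinates are pairwise distinct. -/
theorem spread_apart_configuration (d n L : ℕ) (hd : 0 < d) (hn : 0 < n)
    (hL1 : 3 * n * (n - 2) ≤ L) (hL2 : 3 * n ≤ L)
    (r : Fin n → Fin d → ℕ) (hr : ∀ k j, r k j ∈ Finset.Icc 1 L) :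
    ∃ r' : Fin n → Fin d → ℕ,
      (∀ k j, r' k j ∈ Finset.Icc 1 L) ∧
      (∀ k k' : Fin n, k ≠ k' → r' k ≠ r' k') ∧
      (∀ k k' : Fin n, k ≠ k' → r' k ⟨0, hd⟩ ≠ r' k' ⟨0, hd⟩) ∧
      (∑ k, ∑ j, ((r k j : ℤ) - (r' k j : ℤ)).natAbs)
        ≤ n * d + n * max (n - 1) ((n - 1) * (2 * n - 2)) := by
  have key : ∀ k : ℕ, (hk : k ≤ n) → ∃ y : Fin k → ℕ,
      (∀ i, y i ∈ Finset.Icc 1 L) ∧ Function.Injective y ∧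
      ∀ i : Fin k, ((r (Fin.castLE hk i) ⟨0, hd⟩ : ℤ) - y i).natAbs ≤ n - 1 := by
    intro k
    induction k with
    | zero =>
      intro _
      exact ⟨fun i => i.elim0, fun i => i.elim0, fun i => i.elim0, fun i => i.elim0⟩
    | succ k ih =>
      intro hk
      obtain ⟨y, hy1, hy2, hy3⟩ := ih (Nat.le_of_succ_le hk)
      set S := Finset.image y Finset.univ with hSdef
      have hScard : S.card ≤ k := (Finset.card_image_le).trans (by simp)
      obtain ⟨y', hy'1, hy'2, hy'3⟩ := exists_near L S
        (r (Fin.castLE hk (Fin.last k)) ⟨0, hd⟩) (hr _ _) (by omega)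
      refine ⟨Fin.snoc y y', ?_, ?_, ?_⟩
      · intro i
        induction i using Fin.lastCases with
        | last => rw [Fin.snoc_last]; exact hy'1
        | cast i => rw [Fin.snoc_castSucc]; exact hy1 i
      · intro i j hij
        induction i using Fin.lastCases with
        | last =>
          induction j using Fin.lastCases with
          | last => rfl
          | cast j =>
            rw [Fin.snoc_last, Fin.snoc_castSucc] at hij
            have : y' ∈ S := by
              rw [hij]; exact Finset.mem_image_of_mem y (Finset.mem_univ j)
            exact absurd this hy'2
        | cast i =>
          induction j using Fin.lastCases with
          | last =>
            rw [Fin.snoc_last, Fin.snoc_castSucc] at hij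
            have : y' ∈ S := by
              rw [← hij]; exact Finset.mem_image_of_mem y (Finset.mem_univ i)
            exact absurd this hy'2
          | cast j =>
            rw [Fin.snoc_castSucc, Fin.snoc_castSucc] at hij
            rw [hy2 hij]
      · intro i
        induction i using Fin.lastCases with
        | last => rw [Fin.snoc_last]; exact hy'3.trans (by omega)
        | cast i =>
          rw [Fin.snoc_castSucc]
          exact hy3 i
  obtain ⟨y, hy1, hy2, hy3⟩ := key n le_rfl
  refine ⟨fun k => Function.update (r k) ⟨0, hd⟩ (y k), ?_, ?_, ?_, ?_⟩
  · intro k j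
    dsimp only
    rcases eq_or_ne j ⟨0, hd⟩ with h | h
    · rw [h, Function.update_self]; exact hy1 k
    · rw [Function.update_of_ne h]; exact hr k j
  · intro k k' hkk h
    have h0 := congrFun h ⟨0, hd⟩
    dsimp only at h0
    rw [Function.update_self, Function.update_self] at h0
    exact hkk (hy2 h0)
  · intro k k' hkk h
    dsimp only at h
    rw [Function.update_self, Function.update_self] at h
    exact hkk (hy2 h)
  · have hsum : ∀ k : Fin n,
        (∑ j, ((r k j : ℤ) - (Function.update (r k) ⟨0, hd⟩ (y k) j : ℤ)).natAbs)
          ≤ n - 1 := by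
      intro k
      rw [Finset.sum_eq_single (⟨0, hd⟩ : Fin d)]
      · rw [Function.update_self]
        exact hy3 k
      · intro j _ hj
        rw [Function.update_of_ne hj]
        simp
      · simp
    calc (∑ k, ∑ j, ((r k j : ℤ) - ((fun k => Function.update (r k) ⟨0, hd⟩ (y k)) k j : ℤ)).natAbs)
        ≤ ∑ _k : Fin n, (n - 1) := Finset.sum_le_sum fun k _ => hsum k
      _ = n * (n - 1) := by simp [Finset.sum_const, Nat.mul_comm]
      _ ≤ n * d + n * max (n - 1) ((n - 1) * (2 * n - 2)) := by
          have h2 : n * (n - 1) ≤ n * max (n - 1) ((n - 1) * (2 * n - 2)) :=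
            Nat.mul_le_mul_left n (le_max_left _ _)
          omega
end
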